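/- Strong concavity of fidelity: for density matrices ρ_i, σ_i (i = 0,…,n) and probability distributions (p_i), (q_i), it holds that F(Σ_i p_i ρ_i, Σ_i q_i σ_i) ≥ Σ_i √(p_i q_i) F(ρ_i, σ_i). -/

import Mathlib

open Matrix
open scoped ComplexOrder
noncomputable section

open Classical in
/-- `√A` for positive semidefinite `A` (junk value `0` otherwise). -/
noncomputable def matSqrt {d : ℕ} (A : Matrix (Fin d) (Fin d) ℂ) : Matrix (Fin d) (Fin d) ℂ :=
  if h : A.PosSemidef then
    (h.1.eigenvectorUnitary : Matrix (Fin d) (Fin d) ℂ) *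
      diagonal (((↑) : ℝ → ℂ) ∘ (√·) ∘ h.1.eigenvalues) *
      (star h.1.eigenvectorUnitary : Matrix (Fin d) (Fin d) ℂ)
  else 0

/-- Trace norm `Tr|A| = Tr √(AᴴA)`. -/
noncomputable def traceNorm {d : ℕ} (A : Matrix (Fin d) (Fin d) ℂ) : ℝ :=
  ((matSqrt (Aᴴ * A)).trace).re

/-- Fidelity `F(ρ,σ) = Tr √(√ρ σ √ρ)`. -/
noncomputable def fidelity {d : ℕ} (ρ σ : Matrix (Fin d) (Fin d) ℂ) : ℝ :=
  ((matSqrt (matSqrt ρ * σ * matSqrt ρ)).trace).re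

/-- A density matrix: positive semidefinite with trace one. -/
def IsDensity {d : ℕ} (ρ : Matrix (Fin d) (Fin d) ℂ) : Prop :=
  ρ.PosSemidef ∧ ρ.trace = 1

namespace SCAux
set_option linter.unusedSectionVars false

/-! ### Spectral functional calculus for Hermitian matrices -/

variable {k l : Type*} [Fintype k] [Fintype l] [DecidableEq k] [DecidableEq l]

noncomputable def sf {T : Matrix k k ℂ} (hH : T.IsHermitian) (f : ℝ → ℝ) : Matrix k k ℂ :=
  (hH.eigenvectorUnitary : Matrix k k ℂ) * diagonal ((↑) ∘ f ∘ hH.eigenvalues) *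
    (star hH.eigenvectorUnitary : Matrix k k ℂ)

variable {T : Matrix k k ℂ} (hH : T.IsHermitian)

lemma star_mul_self_u : (star hH.eigenvectorUnitary : Matrix k k ℂ) *
    (hH.eigenvectorUnitary : Matrix k k ℂ) = 1 := by
  exact Unitary.coe_star_mul_self _

lemma mul_star_self_u : (hH.eigenvectorUnitary : Matrix k k ℂ) *
    (star hH.eigenvectorUnitary : Matrix k k ℂ) = 1 := by
  exact Unitary.coe_mul_star_self _

lemma sf_mul (f g : ℝ → ℝ) : sf hH f * sf hH g = sf hH (fun x => f x * g x) := by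
  unfold sf
  simp only [mul_assoc]
  rw [← mul_assoc (star hH.eigenvectorUnitary : Matrix k k ℂ), star_mul_self_u, one_mul,
    ← mul_assoc (diagonal (Complex.ofReal ∘ f ∘ hH.eigenvalues))
      (diagonal (Complex.ofReal ∘ g ∘ hH.eigenvalues)), diagonal_mul_diagonal,
    show (fun i => (Complex.ofReal ∘ f ∘ hH.eigenvalues) i * (Complex.ofReal ∘ g ∘ hH.eigenvalues) i)
      = (Complex.ofReal ∘ (fun x => f x * g x) ∘ hH.eigenvalues) from
      funext fun i => by simp [Complex.ofReal_mul]]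

lemma sf_add (f g : ℝ → ℝ) : sf hH f + sf hH g = sf hH (fun x => f x + g x) := by
  unfold sf
  rw [← add_mul, ← mul_add, diagonal_add,
    show (fun i => (Complex.ofReal ∘ f ∘ hH.eigenvalues) i + (Complex.ofReal ∘ g ∘ hH.eigenvalues) i)
      = (Complex.ofReal ∘ (fun x => f x + g x) ∘ hH.eigenvalues) from
      funext fun i => by simp [Complex.ofReal_add]]

lemma sf_trace (f : ℝ → ℝ) : (sf hH f).trace = ∑ i, (f (hH.eigenvalues i) : ℂ) := by
  unfold sf
  rw [trace_mul_comm, ← mul_assoc, star_mul_self_u, one_mul, trace_diagonal]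
  simp

lemma sf_one : sf hH (fun _ => 1) = 1 := by
  unfold sf
  rw [show ((↑) ∘ (fun (_:ℝ) => (1:ℝ)) ∘ hH.eigenvalues) = (fun (_:k) => (1:ℂ)) from
    funext fun i => by simp, diagonal_one, mul_one, mul_star_self_u]

lemma sf_zero : sf hH (fun _ => 0) = 0 := by
  unfold sf
  rw [show ((↑) ∘ (fun (_:ℝ) => (0:ℝ)) ∘ hH.eigenvalues) = (fun (_:k) => (0:ℂ)) from
    funext fun i => by simp, diagonal_zero, mul_zero, zero_mul]

lemma sf_conjTranspose (f : ℝ → ℝ) : (sf hH f)ᴴ = sf hH f := by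
  unfold sf
  simp only [conjTranspose_mul, diagonal_conjTranspose, ← mul_assoc]
  rw [show ((star hH.eigenvectorUnitary : Matrix k k ℂ))ᴴ = (hH.eigenvectorUnitary : Matrix k k ℂ)
      from by rw [← star_eq_conjTranspose, star_star],
    show ((hH.eigenvectorUnitary : Matrix k k ℂ))ᴴ = (star hH.eigenvectorUnitary : Matrix k k ℂ)
      from (star_eq_conjTranspose _),
    show (star (Complex.ofReal ∘ f ∘ hH.eigenvalues) : k → ℂ) = Complex.ofReal ∘ f ∘ hH.eigenvalues
      from funext fun i => by simp [Pi.star_def, Complex.conj_ofReal]]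

lemma sf_isHermitian (f : ℝ → ℝ) : (sf hH f).IsHermitian := sf_conjTranspose hH f

lemma sf_posSemidef (f : ℝ → ℝ) (hf : ∀ i, 0 ≤ f (hH.eigenvalues i)) :
    (sf hH f).PosSemidef := by
  unfold sf
  rw [show (star hH.eigenvectorUnitary : Matrix k k ℂ)
      = (hH.eigenvectorUnitary : Matrix k k ℂ)ᴴ from rfl]
  refine PosSemidef.mul_mul_conjTranspose_same ?_ _
  refine posSemidef_diagonal_iff.mpr fun i => ?_
  simpa using Complex.zero_le_real.mpr (hf i)

lemma sf_congr (f g : ℝ → ℝ) (h : ∀ i, f (hH.eigenvalues i) = g (hH.eigenvalues i)) :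
    sf hH f = sf hH g := by
  unfold sf
  rw [show (Complex.ofReal ∘ f ∘ hH.eigenvalues) = (Complex.ofReal ∘ g ∘ hH.eigenvalues) from
    funext fun i => by simp [h i]]

lemma sf_id : sf hH id = T := by
  unfold sf
  exact hH.spectral_theorem.symm

/-! ### Elementary positivity facts -/

lemma re_nonneg_of_nonneg {z : ℂ} (h : 0 ≤ z) : 0 ≤ z.re := (Complex.le_def.mp h).1

lemma psd_diag_nonneg {A : Matrix k k ℂ} (hA : A.PosSemidef) (i : k) : 0 ≤ A i i := by
  exact hA.diag_nonneg

lemma psd_trace_nonneg {A : Matrix k k ℂ} (hA : A.PosSemidef) : 0 ≤ A.trace :=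
  Finset.sum_nonneg fun i _ => psd_diag_nonneg hA i

lemma trace_mul_psd_nonneg {M K : Matrix k k ℂ} (hM : M.PosSemidef) (hK : K.PosSemidef) :
    0 ≤ (M * K).trace := by
  have hs : sf hM.1 Real.sqrt * sf hM.1 Real.sqrt = M := by
    rw [sf_mul, sf_congr hM.1 _ id (fun i => by
      simp [Real.mul_self_sqrt (hM.eigenvalues_nonneg i)]), sf_id]
  have hherm : (sf hM.1 Real.sqrt)ᴴ = sf hM.1 Real.sqrt := sf_conjTranspose _ _
  have : (M * K).trace = (sf hM.1 Real.sqrt * K * (sf hM.1 Real.sqrt)ᴴ).trace := by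
    rw [hherm]
    conv_lhs => rw [← hs]
    rw [mul_assoc, trace_mul_comm, mul_assoc]
  rw [this]
  exact psd_trace_nonneg (hK.mul_mul_conjTranspose_same _)

/-! ### Cauchy–Schwarz for the trace inner product -/

lemma dot_CS (v u : k → ℂ) : ‖star v ⬝ᵥ u‖ ≤
    Real.sqrt (star v ⬝ᵥ v).re * Real.sqrt (star u ⬝ᵥ u).re := by
  have h1 : ∀ w : k → ℂ, Real.sqrt (star w ⬝ᵥ w).re = ‖(WithLp.toLp 2 w : EuclideanSpace ℂ k)‖ := by
    intro w
    rw [EuclideanSpace.norm_eq]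
    congr 1
    rw [dotProduct, Complex.re_sum]
    refine Finset.sum_congr rfl fun i _ => ?_
    simp only [Pi.star_apply, Complex.star_def]
    rw [mul_comm, Complex.mul_conj]
    simp [Complex.sq_norm]
  rw [h1, h1]
  have := norm_inner_le_norm (𝕜 := ℂ) (WithLp.toLp 2 v : EuclideanSpace ℂ k) (WithLp.toLp 2 u)
  rwa [EuclideanSpace.inner_toLp_toLp, dotProduct_comm] at this

lemma norm_of_nonneg' {z : ℂ} (h : 0 ≤ z) : ‖z‖ = z.re := by
  have him : z.im = 0 := (Complex.le_def.mp h).2.symm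
  have : z = ((z.re : ℝ) : ℂ) := by
    apply Complex.ext <;> simp [him]
  rw [this]
  simp [Complex.norm_real, abs_of_nonneg (Complex.le_def.mp h).1]

lemma trace_conjTranspose_mul (X Y : Matrix k l ℂ) :
    (Xᴴ * Y).trace = star (fun p : k × l => X p.1 p.2) ⬝ᵥ (fun p : k × l => Y p.1 p.2) := by
  rw [trace, dotProduct]
  simp only [diag_apply, mul_apply, conjTranspose_apply, Pi.star_apply]
  rw [← Finset.sum_product']
  exact Finset.sum_equiv (Equiv.prodComm l k) (by simp) (by simp)

lemma trace_CS (X Y : Matrix k l ℂ) : ‖(Xᴴ * Y).trace‖ ≤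
    Real.sqrt ((Xᴴ * X).trace).re * Real.sqrt ((Yᴴ * Y).trace).re := by
  rw [trace_conjTranspose_mul, trace_conjTranspose_mul, trace_conjTranspose_mul]
  exact dot_CS _ _

/-! ### Contractions -/

lemma contr {X : Matrix k l ℂ} (h : (1 - X * Xᴴ).PosSemidef) :
    (1 - Xᴴ * X).PosSemidef := by
  refine PosSemidef.of_dotProduct_mulVec_nonneg ?_ ?_
  · exact IsHermitian.sub isHermitian_one (isHermitian_conjTranspose_mul_self X)
  intro v
  set w := X *ᵥ v with hw
  set u := Xᴴ *ᵥ w with hu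
  have e0 : (Xᴴ * X) *ᵥ v = u := by rw [← mulVec_mulVec]
  have e1 : star v ⬝ᵥ ((Xᴴ * X) *ᵥ v) = star w ⬝ᵥ w := by
    rw [e0, hu, dotProduct_mulVec, ← star_mulVec]
  have e2 : star w ⬝ᵥ ((X * Xᴴ) *ᵥ w) = star u ⬝ᵥ u := by
    rw [← mulVec_mulVec, dotProduct_mulVec,
      show star w ᵥ* X = star u from
        (((star_mulVec Xᴴ w).trans (by rw [conjTranspose_conjTranspose])).symm), ← hu]
  have hvv := dotProduct_star_self_nonneg v
  have hww := dotProduct_star_self_nonneg w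
  have huu := dotProduct_star_self_nonneg u
  set a := (star v ⬝ᵥ v).re with ha
  set b := (star w ⬝ᵥ w).re with hb
  set c := (star u ⬝ᵥ u).re with hc
  have ha0 : 0 ≤ a := (Complex.le_def.mp hvv).1
  have hb0 : 0 ≤ b := (Complex.le_def.mp hww).1
  have hc0 : 0 ≤ c := (Complex.le_def.mp huu).1
  have hcb : c ≤ b := by
    have h2 := h.dotProduct_mulVec_nonneg w
    rw [sub_mulVec, one_mulVec, dotProduct_sub, e2] at h2
    have := (Complex.le_def.mp h2).1
    simp only [Complex.zero_re, Complex.sub_re] at this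
    linarith
  have hkey : b ≤ Real.sqrt a * Real.sqrt c := by
    have hvu : star v ⬝ᵥ u = star w ⬝ᵥ w := by rw [← e0, e1]
    have : ‖star v ⬝ᵥ u‖ = b := by rw [hvu, norm_of_nonneg' hww]
    rw [← this]
    exact dot_CS v u
  have hba : b ≤ a := by
    have hsq : b ^ 2 ≤ a * c := by
      have h1 : b ^ 2 ≤ (Real.sqrt a * Real.sqrt c) ^ 2 := by
        apply pow_le_pow_left₀ hb0 hkey
      calc b ^ 2 ≤ (Real.sqrt a * Real.sqrt c) ^ 2 := h1
        _ = a * c := by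
          rw [mul_pow, Real.sq_sqrt ha0, Real.sq_sqrt hc0]
    nlinarith
  rw [sub_mulVec, one_mulVec, dotProduct_sub, e1]
  rw [Complex.le_def]
  constructor
  · simp only [Complex.zero_re, Complex.sub_re]
    linarith
  · simp only [Complex.zero_im, Complex.sub_im]
    rw [(Complex.le_def.mp hvv).2.symm, (Complex.le_def.mp hww).2.symm]
    ring

/-! ### Pointwise functions -/

def sinv (x : ℝ) : ℝ := (Real.sqrt x)⁻¹

def chi (x : ℝ) : ℝ := if x = 0 then 0 else 1
def chi' (x : ℝ) : ℝ := if x = 0 then 1 else 0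

lemma pw_s_si {x : ℝ} (hx : 0 ≤ x) : Real.sqrt x * sinv x = chi x := by
  rw [sinv]
  rcases eq_or_lt_of_le hx with h | h
  · simp [chi, ← h]
  · rw [chi, if_neg (ne_of_gt h)]
    exact mul_inv_cancel₀ (ne_of_gt (Real.sqrt_pos.mpr h))

lemma pw_si_id_si {x : ℝ} (hx : 0 ≤ x) :
    sinv x * (x * sinv x) = chi x := by
  rw [sinv]
  rcases eq_or_lt_of_le hx with h | h
  · simp [chi, ← h]
  · rw [chi, if_neg (ne_of_gt h)]
    set s := Real.sqrt x with hs
    have hs0 : s ≠ 0 := ne_of_gt (Real.sqrt_pos.mpr h)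
    have hss : s * s = x := Real.mul_self_sqrt hx
    rw [← hss]
    field_simp

lemma pw_id_si {x : ℝ} (hx : 0 ≤ x) : x * (Real.sqrt x)⁻¹ = Real.sqrt x := by
  rcases eq_or_lt_of_le hx with h | h
  · simp [← h]
  · set s := Real.sqrt x with hs
    have hs0 : s ≠ 0 := ne_of_gt (Real.sqrt_pos.mpr h)
    have hss : s * s = x := Real.mul_self_sqrt hx
    rw [← hss]
    field_simp

lemma pw_chi_sum (x : ℝ) : chi x + chi' x = 1 := by
  by_cases h : x = 0 <;> simp [chi, chi', h]

lemma pw_chi'_id (x : ℝ) : chi' x * x * chi' x = 0 := by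
  by_cases h : x = 0 <;> simp [chi', h]

lemma pw_chi'_id' (x : ℝ) : chi' x * (x * chi' x) = 0 := by
  by_cases h : x = 0 <;> simp [chi', h]

lemma pw_si_chi (x : ℝ) : sinv x * chi x = sinv x := by
  rw [sinv]
  by_cases h : x = 0 <;> simp [chi, h]

lemma pw_s_chi (x : ℝ) : Real.sqrt x * chi x = Real.sqrt x := by
  by_cases h : x = 0 <;> simp [chi, h]

lemma pw_r4_r4 (x : ℝ) : Real.sqrt (Real.sqrt x) * Real.sqrt (Real.sqrt x) = Real.sqrt x :=
  Real.mul_self_sqrt (Real.sqrt_nonneg x)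

lemma pw_chi'_nonneg (x : ℝ) : 0 ≤ chi' x := by
  by_cases h : x = 0 <;> simp [chi', h]

/-! ### matSqrt lemmas -/

variable {d : ℕ}

lemma matSqrt_eq {A : Matrix (Fin d) (Fin d) ℂ} (hA : A.PosSemidef) :
    matSqrt A = sf hA.1 Real.sqrt := by
  unfold matSqrt; rw [dif_pos hA]; rfl

lemma matSqrt_eq_sf {A : Matrix (Fin d) (Fin d) ℂ} (hA : A.PosSemidef) :
    matSqrt A = sf hA.1 Real.sqrt := by
  rw [matSqrt_eq hA]

lemma matSqrt_posSemidef {A : Matrix (Fin d) (Fin d) ℂ} (hA : A.PosSemidef) :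
    (matSqrt A).PosSemidef := by rw [matSqrt_eq hA]; exact sf_posSemidef _ _ (fun i => Real.sqrt_nonneg _)

lemma matSqrt_herm {A : Matrix (Fin d) (Fin d) ℂ} (hA : A.PosSemidef) :
    (matSqrt A)ᴴ = matSqrt A := (matSqrt_posSemidef hA).1

lemma matSqrt_mul_self {A : Matrix (Fin d) (Fin d) ℂ} (hA : A.PosSemidef) :
    matSqrt A * matSqrt A = A := by rw [matSqrt_eq hA, sf_mul,
    sf_congr hA.1 _ id (fun i => by simp [Real.mul_self_sqrt (hA.eigenvalues_nonneg i)]), sf_id]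

lemma fidelity_eq {ρ σ : Matrix (Fin d) (Fin d) ℂ} (hρ : ρ.PosSemidef) (hσ : σ.PosSemidef) :
    fidelity ρ σ =
      ((matSqrt ((matSqrt σ * matSqrt ρ)ᴴ * (matSqrt σ * matSqrt ρ))).trace).re := by
  unfold fidelity
  congr 2
  rw [conjTranspose_mul, matSqrt_herm hρ, matSqrt_herm hσ]
  conv_rhs => rw [mul_assoc, ← mul_assoc (matSqrt σ), matSqrt_mul_self hσ]
  rw [mul_assoc]

/-! ### Support absorption -/

variable {m : Type*} [Fintype m] [DecidableEq m]

lemma one_sub_chi {A : Matrix (Fin d) (Fin d) ℂ} (hA : A.PosSemidef) :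
    1 - sf hA.1 chi = sf hA.1 chi' := by
  have h1 : sf hA.1 chi + sf hA.1 chi' = 1 := by
    rw [sf_add hA.1, show (fun x => chi x + chi' x) = (fun _ : ℝ => (1:ℝ)) from
      funext pw_chi_sum]
    exact sf_one hA.1
  rw [← h1]
  abel

lemma support_absorb {ρ : Matrix (Fin d) (Fin d) ℂ} (hρ : ρ.PosSemidef)
    (A : Matrix (Fin d) m ℂ) (hA : A * Aᴴ = ρ) : sf hρ.1 chi * A = A := by
  have key : sf hρ.1 chi' * sf hρ.1 id * sf hρ.1 chi' = 0 := by
    rw [sf_mul, sf_mul, sf_congr hρ.1 _ (fun _ => 0) (fun i => by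
      simpa using pw_chi'_id (hρ.1.eigenvalues i)), sf_zero]
  rw [sf_id] at key
  have hz : ((sf hρ.1 chi') * A) * ((sf hρ.1 chi') * A)ᴴ = 0 := by
    rw [conjTranspose_mul, sf_conjTranspose, ← Matrix.mul_assoc,
      Matrix.mul_assoc (sf hρ.1 chi') A Aᴴ, hA, key]
  have h0 : sf hρ.1 chi' * A = 0 := self_mul_conjTranspose_eq_zero.mp hz
  rw [← one_sub_chi hρ, Matrix.sub_mul, Matrix.one_mul, sub_eq_zero] at h0
  exact h0.symm

lemma support_absorb_right {N : Matrix (Fin d) (Fin d) ℂ}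
    (hT : (Nᴴ * N).PosSemidef) : N * sf hT.1 chi = N := by
  have key : sf hT.1 chi' * (sf hT.1 id * sf hT.1 chi') = 0 := by
    rw [sf_mul, sf_mul, sf_congr hT.1 _ (fun _ => 0) (fun i => by
      simpa using pw_chi'_id' (hT.1.eigenvalues i)), sf_zero]
  rw [sf_id] at key
  have hz : (N * sf hT.1 chi')ᴴ * (N * sf hT.1 chi') = 0 := by
    rw [conjTranspose_mul, sf_conjTranspose, Matrix.mul_assoc, ← Matrix.mul_assoc Nᴴ N, key]
  have h0 : N * sf hT.1 chi' = 0 := conjTranspose_mul_self_eq_zero.mp hz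
  rw [← one_sub_chi hT, Matrix.mul_sub, Matrix.mul_one, sub_eq_zero] at h0
  exact h0.symm


/-! ### Uhlmann-type bound -/

lemma uhlmann {ρ σ : Matrix (Fin d) (Fin d) ℂ} (hρ : ρ.PosSemidef) (hσ : σ.PosSemidef)
    (A B : Matrix (Fin d) m ℂ) (hA : A * Aᴴ = ρ) (hB : B * Bᴴ = σ) :
    ‖(Aᴴ * B).trace‖ ≤ fidelity ρ σ := by
  have hRsf : matSqrt ρ = sf hρ.1 Real.sqrt := matSqrt_eq_sf hρ
  have hSsf : matSqrt σ = sf hσ.1 Real.sqrt := matSqrt_eq_sf hσ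
  obtain ⟨VA, hVAdef⟩ : ∃ X, X = sf hρ.1 sinv * A := ⟨_, rfl⟩
  obtain ⟨VB, hVBdef⟩ : ∃ X, X = sf hσ.1 sinv * B := ⟨_, rfl⟩
  have hRVA : matSqrt ρ * VA = A := by
    rw [hVAdef, ← Matrix.mul_assoc, hRsf, sf_mul,
      sf_congr hρ.1 _ chi (fun i => pw_s_si (hρ.eigenvalues_nonneg i)),
      support_absorb hρ A hA]
  have hSVB : matSqrt σ * VB = B := by
    rw [hVBdef, ← Matrix.mul_assoc, hSsf, sf_mul,
      sf_congr hσ.1 _ chi (fun i => pw_s_si (hσ.eigenvalues_nonneg i)),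
      support_absorb hσ B hB]
  have keyA : sf hρ.1 sinv * sf hρ.1 id * sf hρ.1 sinv = sf hρ.1 chi := by
    rw [sf_mul, sf_mul]
    exact sf_congr hρ.1 _ _ (fun i => by
      simp only [id_eq, mul_assoc]; exact pw_si_id_si (hρ.eigenvalues_nonneg i))
  rw [sf_id] at keyA
  have keyB : sf hσ.1 sinv * sf hσ.1 id * sf hσ.1 sinv = sf hσ.1 chi := by
    rw [sf_mul, sf_mul]
    exact sf_congr hσ.1 _ _ (fun i => by
      simp only [id_eq, mul_assoc]; exact pw_si_id_si (hσ.eigenvalues_nonneg i))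
  rw [sf_id] at keyB
  have hVAA : VA * VAᴴ = sf hρ.1 chi := by
    rw [hVAdef, conjTranspose_mul, sf_conjTranspose, ← Matrix.mul_assoc,
      Matrix.mul_assoc (sf hρ.1 sinv) A Aᴴ, hA, keyA]
  have hVBB : VB * VBᴴ = sf hσ.1 chi := by
    rw [hVBdef, conjTranspose_mul, sf_conjTranspose, ← Matrix.mul_assoc,
      Matrix.mul_assoc (sf hσ.1 sinv) B Bᴴ, hB, keyB]
  -- the operator N and its polar data
  obtain ⟨N, hNdef⟩ : ∃ X, X = matSqrt σ * matSqrt ρ := ⟨_, rfl⟩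
  have hT : (Nᴴ * N).PosSemidef := posSemidef_conjTranspose_mul_self N
  have hevT : ∀ i, 0 ≤ hT.1.eigenvalues i := hT.eigenvalues_nonneg
  obtain ⟨G, hGdef⟩ : ∃ X, X = sf hT.1 Real.sqrt := ⟨_, rfl⟩
  obtain ⟨Gp, hGpdef⟩ : ∃ X, X = sf hT.1 sinv := ⟨_, rfl⟩
  obtain ⟨H, hHdef⟩ : ∃ X, X = sf hT.1 (fun x => Real.sqrt (Real.sqrt x)) := ⟨_, rfl⟩
  have hfid : fidelity ρ σ = G.trace.re := by
    rw [fidelity_eq hρ hσ, ← hNdef, matSqrt_eq_sf hT, ← hGdef]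
  have hg0 : 0 ≤ G.trace.re := by
    rw [hGdef, sf_trace, Complex.re_sum]
    refine Finset.sum_nonneg fun i _ => ?_
    simp [Real.sqrt_nonneg]
  have hGGp : G * Gp = sf hT.1 chi := by
    rw [hGdef, hGpdef, sf_mul]
    exact sf_congr hT.1 _ _ (fun i => pw_s_si (hevT i))
  have hNE : N * sf hT.1 chi = N := support_absorb_right hT
  have hNC : sf hT.1 chi * Nᴴ = Nᴴ := by
    have h := congrArg conjTranspose hNE
    rwa [conjTranspose_mul, sf_conjTranspose] at h
  have htr1 : Aᴴ * B = VAᴴ * (Nᴴ * VB) := by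
    conv_lhs => rw [← hRVA, ← hSVB]
    rw [conjTranspose_mul, matSqrt_herm hρ, Matrix.mul_assoc,
      ← Matrix.mul_assoc (matSqrt ρ) (matSqrt σ) VB,
      show matSqrt ρ * matSqrt σ = Nᴴ from by
        rw [hNdef, conjTranspose_mul, matSqrt_herm hρ, matSqrt_herm hσ]]
  obtain ⟨C, hCdef⟩ : ∃ X, X = VB * VAᴴ := ⟨_, rfl⟩
  have htr2 : (Aᴴ * B).trace = (Nᴴ * C).trace := by
    rw [htr1, trace_mul_comm, Matrix.mul_assoc, ← hCdef]
  have hHH : H * H = G := by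
    rw [hHdef, sf_mul, hGdef]
    exact sf_congr hT.1 _ _ (fun i => pw_r4_r4 _)
  have hHherm : Hᴴ = H := by rw [hHdef]; exact sf_conjTranspose hT.1 _
  have hGpherm : Gpᴴ = Gp := by rw [hGpdef]; exact sf_conjTranspose hT.1 _
  obtain ⟨Y, hYdef⟩ : ∃ X, X = H * ((Gp * Nᴴ) * C) := ⟨_, rfl⟩
  have hNC2 : Nᴴ * C = Hᴴ * Y := by
    rw [hYdef, hHherm, ← Matrix.mul_assoc H H, hHH, ← Matrix.mul_assoc G (Gp * Nᴴ) C,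
      ← Matrix.mul_assoc G Gp Nᴴ, hGGp, hNC]
  have keyT : sf hT.1 sinv * (sf hT.1 id * sf hT.1 sinv) = sf hT.1 chi := by
    rw [sf_mul, sf_mul]
    exact sf_congr hT.1 _ _ (fun i => by
      simpa using pw_si_id_si (hevT i))
  rw [sf_id] at keyT
  have hWW : (Gp * Nᴴ) * (N * Gp) = sf hT.1 chi := by
    rw [hGpdef, Matrix.mul_assoc, ← Matrix.mul_assoc Nᴴ N, keyT]
  obtain ⟨M, hMdef⟩ : ∃ X, X = (N * Gp) * (G * (Gp * Nᴴ)) := ⟨_, rfl⟩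
  have hYY : Yᴴ * Y = Cᴴ * (M * C) := by
    rw [hYdef, hMdef]
    simp only [conjTranspose_mul, conjTranspose_conjTranspose, hHherm, hGpherm,
      Matrix.mul_assoc]
    rw [← Matrix.mul_assoc H H, hHH]
  have hMpsd : M.PosSemidef := by
    have hM : ((N * Gp) * H) * (((N * Gp) * H)ᴴ) = M := by
      rw [hMdef]
      simp only [conjTranspose_mul, conjTranspose_conjTranspose, hHherm, hGpherm,
        Matrix.mul_assoc]
      rw [← Matrix.mul_assoc H H, hHH]
    rw [← hM]
    exact posSemidef_self_mul_conjTranspose _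
  have hMtrace : M.trace = G.trace := by
    rw [hMdef, trace_mul_comm, Matrix.mul_assoc, hWW, hGdef, sf_mul,
      sf_congr hT.1 _ Real.sqrt (fun i => pw_s_chi _)]
  have hCC : (1 - C * Cᴴ).PosSemidef := by
    have h1 : (1 - VAᴴ * VA).PosSemidef := by
      refine contr ?_
      rw [hVAA, one_sub_chi hρ]
      exact sf_posSemidef _ _ (fun i => pw_chi'_nonneg _)
    have h2 : (1 - VB * VBᴴ).PosSemidef := by
      rw [hVBB, one_sub_chi hσ]
      exact sf_posSemidef _ _ (fun i => pw_chi'_nonneg _)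
    have h3 : (VB * (1 - VAᴴ * VA) * VBᴴ).PosSemidef :=
      h1.mul_mul_conjTranspose_same VB
    have hid : (1 : Matrix (Fin d) (Fin d) ℂ) - C * Cᴴ
        = VB * (1 - VAᴴ * VA) * VBᴴ + (1 - VB * VBᴴ) := by
      rw [hCdef, conjTranspose_mul, conjTranspose_conjTranspose]
      simp only [Matrix.mul_sub, Matrix.sub_mul, Matrix.mul_one, Matrix.one_mul,
        Matrix.mul_assoc]
      abel
    rw [hid]
    exact h3.add h2
  have hcyc : (Yᴴ * Y).trace = (M * (C * Cᴴ)).trace := by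
    rw [hYY, trace_mul_comm, Matrix.mul_assoc]
  have hYYtr : ((Yᴴ * Y).trace).re ≤ G.trace.re := by
    have h0 := trace_mul_psd_nonneg hMpsd hCC
    rw [Matrix.mul_sub, Matrix.mul_one, trace_sub] at h0
    have h1 := re_nonneg_of_nonneg h0
    rw [Complex.sub_re] at h1
    rw [hcyc]
    have h2 := congrArg Complex.re hMtrace
    linarith
  calc ‖(Aᴴ * B).trace‖ = ‖(Hᴴ * Y).trace‖ := by rw [htr2, hNC2]
    _ ≤ Real.sqrt ((Hᴴ * H).trace).re * Real.sqrt ((Yᴴ * Y).trace).re := trace_CS H Y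
    _ ≤ Real.sqrt (G.trace.re) * Real.sqrt (G.trace.re) := by
        rw [hHherm, hHH]
        exact mul_le_mul_of_nonneg_left (Real.sqrt_le_sqrt hYYtr) (Real.sqrt_nonneg _)
    _ = G.trace.re := Real.mul_self_sqrt hg0
    _ = fidelity ρ σ := hfid.symm

/-! ### Block matrix lemmas -/

lemma psd_smul {c : ℝ} (hc : 0 ≤ c) {M : Matrix k k ℂ} (hM : M.PosSemidef) :
    ((c : ℂ) • M).PosSemidef := by
  refine PosSemidef.of_dotProduct_mulVec_nonneg ?_ ?_
  · unfold Matrix.IsHermitian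
    rw [conjTranspose_smul, hM.1]
    congr 1
    simp [Complex.conj_ofReal]
  · intro x
    rw [smul_mulVec, dotProduct_smul, smul_eq_mul]
    exact mul_nonneg (Complex.zero_le_real.mpr hc) (hM.dotProduct_mulVec_nonneg x)

lemma trace_fromBlocks {α γ : Type*} [Fintype α] [Fintype γ]
    (A : Matrix α α ℂ) (B : Matrix α γ ℂ) (C : Matrix γ α ℂ) (D : Matrix γ γ ℂ) :
    (fromBlocks A B C D).trace = A.trace + D.trace := by
  simp [trace, Fintype.sum_sum_type]

lemma blocks_mul_conjTranspose {α β : Type*} [Fintype α] [Fintype β]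
    (X Y : β → Matrix (Fin d) α ℂ) :
    (Matrix.of fun x (j : α × β) => X j.2 x j.1) *
      (Matrix.of fun x (j : α × β) => Y j.2 x j.1)ᴴ = ∑ b, X b * (Y b)ᴴ := by
  ext x y
  simp only [mul_apply, conjTranspose_apply, of_apply, Matrix.sum_apply]
  rw [Fintype.sum_prod_type, Finset.sum_comm]

lemma blocks_trace {α β : Type*} [Fintype α] [Fintype β]
    (X Y : β → Matrix (Fin d) α ℂ) :
    ((Matrix.of fun x (j : α × β) => X j.2 x j.1)ᴴ *
      (Matrix.of fun x (j : α × β) => Y j.2 x j.1)).trace = ∑ b, ((X b)ᴴ * Y b).trace := by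
  simp only [trace, diag_apply, mul_apply, conjTranspose_apply, of_apply]
  rw [Fintype.sum_prod_type, Finset.sum_comm]

end SCAux

open SCAux in
/-- Strong concavity of fidelity. -/
theorem fidelity_strong_concavity {d n : ℕ}
    (ρ σ : Fin (n + 1) → Matrix (Fin d) (Fin d) ℂ)
    (hρ : ∀ i, IsDensity (ρ i)) (hσ : ∀ i, IsDensity (σ i))
    (p q : Fin (n + 1) → ℝ)
    (hp : ∀ i, 0 ≤ p i) (hq : ∀ i, 0 ≤ q i)
    (hps : ∑ i, p i = 1) (hqs : ∑ i, q i = 1) :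
    fidelity (∑ i, (p i : ℂ) • ρ i) (∑ i, (q i : ℂ) • σ i)
      ≥ ∑ i, Real.sqrt (p i * q i) * fidelity (ρ i) (σ i) := by
  classical
  have hρP : ∀ i, (ρ i).PosSemidef := fun i => (hρ i).1
  have hσP : ∀ i, (σ i).PosSemidef := fun i => (hσ i).1
  have hρbP : (∑ i, (p i : ℂ) • ρ i).PosSemidef :=
    Finset.sum_induction _ _ (fun a b ha hb => ha.add hb) Matrix.PosSemidef.zero
      (fun i _ => psd_smul (hp i) (hρP i))
  have hσbP : (∑ i, (q i : ℂ) • σ i).PosSemidef :=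
    Finset.sum_induction _ _ (fun a b ha hb => ha.add hb) Matrix.PosSemidef.zero
      (fun i _ => psd_smul (hq i) (hσP i))
  obtain ⟨N, hN⟩ : ∃ f : Fin (n+1) → Matrix (Fin d) (Fin d) ℂ,
      ∀ i, f i = matSqrt (σ i) * matSqrt (ρ i) := ⟨_, fun _ => rfl⟩
  have hT : ∀ i, ((N i)ᴴ * N i).PosSemidef := fun i => posSemidef_conjTranspose_mul_self _
  obtain ⟨G, hG⟩ : ∃ f : Fin (n+1) → Matrix (Fin d) (Fin d) ℂ,
      ∀ i, f i = sf (hT i).1 Real.sqrt := ⟨_, fun _ => rfl⟩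
  obtain ⟨Gp, hGp⟩ : ∃ f : Fin (n+1) → Matrix (Fin d) (Fin d) ℂ,
      ∀ i, f i = sf (hT i).1 sinv := ⟨_, fun _ => rfl⟩
  obtain ⟨W, hW⟩ : ∃ f : Fin (n+1) → Matrix (Fin d) (Fin d) ℂ,
      ∀ i, f i = N i * Gp i := ⟨_, fun _ => rfl⟩
  obtain ⟨P, hP⟩ : ∃ f : Fin (n+1) → Matrix (Fin d) (Fin d) ℂ,
      ∀ i, f i = W i * (W i)ᴴ := ⟨_, fun _ => rfl⟩
  have hGpherm : ∀ i, (Gp i)ᴴ = Gp i := fun i => by rw [hGp]; exact sf_conjTranspose _ _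
  have keyT : ∀ i, sf (hT i).1 sinv * ((N i)ᴴ * N i * sf (hT i).1 sinv) = sf (hT i).1 chi := by
    intro i
    have k : sf (hT i).1 sinv * (sf (hT i).1 id * sf (hT i).1 sinv) = sf (hT i).1 chi := by
      rw [sf_mul, sf_mul]
      exact sf_congr _ _ _ (fun j => by simpa using pw_si_id_si ((hT i).eigenvalues_nonneg j))
    rwa [sf_id] at k
  have hWW : ∀ i, (W i)ᴴ * W i = sf (hT i).1 chi := by
    intro i
    rw [hW, conjTranspose_mul, hGpherm i, hGp, Matrix.mul_assoc,
      ← Matrix.mul_assoc ((N i)ᴴ) (N i), keyT i]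
  have hWE : ∀ i, W i * sf (hT i).1 chi = W i := by
    intro i
    rw [hW, Matrix.mul_assoc, hGp, sf_mul, sf_congr (hT i).1 _ sinv (fun j => pw_si_chi _)]
  have hPP : ∀ i, P i * P i = P i := by
    intro i
    have hchiW : sf (hT i).1 chi * (W i)ᴴ = (W i)ᴴ := by
      have := congrArg conjTranspose (hWE i)
      rwa [conjTranspose_mul, sf_conjTranspose] at this
    rw [hP, Matrix.mul_assoc, ← Matrix.mul_assoc ((W i)ᴴ) (W i), hWW i, hchiW]
  have hPherm : ∀ i, (P i)ᴴ = P i := fun i => by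
    rw [hP, conjTranspose_mul, conjTranspose_conjTranspose]
  have hSd : ∀ i, (matSqrt (σ i) * W i) * (matSqrt (σ i) * W i)ᴴ
      + (matSqrt (σ i) * (1 - P i)) * (matSqrt (σ i) * (1 - P i))ᴴ = σ i := by
    intro i
    have h2 : (1 - P i) * (1 - P i) = 1 - P i := by
      simp only [Matrix.sub_mul, Matrix.mul_sub, Matrix.one_mul, Matrix.mul_one, hPP i]
      abel
    have h3 : P i + (1 - P i) = 1 := by abel
    rw [conjTranspose_mul, conjTranspose_mul, matSqrt_herm (hσP i), conjTranspose_sub,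
      conjTranspose_one, hPherm i]
    simp only [Matrix.mul_assoc]
    rw [← Matrix.mul_assoc (W i) ((W i)ᴴ), ← hP i,
      ← Matrix.mul_assoc (1 - P i) (1 - P i), h2,
      ← Matrix.mul_add, ← Matrix.add_mul, h3, Matrix.one_mul, matSqrt_mul_self (hσP i)]
  have hRSW : ∀ i, (matSqrt (ρ i))ᴴ * (matSqrt (σ i) * W i) = G i := by
    intro i
    have k : sf (hT i).1 id * sf (hT i).1 sinv = sf (hT i).1 Real.sqrt := by
      rw [sf_mul]
      exact sf_congr _ _ _ (fun j => by simpa [sinv] using pw_id_si ((hT i).eigenvalues_nonneg j))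
    rw [sf_id] at k
    rw [matSqrt_herm (hρP i), ← Matrix.mul_assoc,
      show matSqrt (ρ i) * matSqrt (σ i) = (N i)ᴴ from by
        rw [hN, conjTranspose_mul, matSqrt_herm (hρP i), matSqrt_herm (hσP i)],
      hW, hGp, ← Matrix.mul_assoc, k, ← hG i]
  have hfid_i : ∀ i, fidelity (ρ i) (σ i) = ((G i).trace).re := by
    intro i
    rw [fidelity_eq (hρP i) (hσP i), ← hN i, matSqrt_eq_sf (hT i), ← hG i]
  -- block matrices
  obtain ⟨Xf, hXf⟩ : ∃ f : Fin (n+1) → Matrix (Fin d) (Fin d ⊕ Fin d) ℂ,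
      ∀ i, f i = fromCols (((Real.sqrt (p i) : ℝ) : ℂ) • matSqrt (ρ i)) 0 :=
    ⟨_, fun _ => rfl⟩
  obtain ⟨Yf, hYf⟩ : ∃ f : Fin (n+1) → Matrix (Fin d) (Fin d ⊕ Fin d) ℂ,
      ∀ i, f i = fromCols (((Real.sqrt (q i) : ℝ) : ℂ) • (matSqrt (σ i) * W i))
        (((Real.sqrt (q i) : ℝ) : ℂ) • (matSqrt (σ i) * (1 - P i))) := ⟨_, fun _ => rfl⟩
  obtain ⟨AA, hAAdef⟩ : ∃ X : Matrix (Fin d) ((Fin d ⊕ Fin d) × Fin (n+1)) ℂ,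
      X = Matrix.of (fun x j => Xf j.2 x j.1) := ⟨_, rfl⟩
  obtain ⟨BB, hBBdef⟩ : ∃ X : Matrix (Fin d) ((Fin d ⊕ Fin d) × Fin (n+1)) ℂ,
      X = Matrix.of (fun x j => Yf j.2 x j.1) := ⟨_, rfl⟩
  have hAAA : AA * AAᴴ = ∑ i, (p i : ℂ) • ρ i := by
    rw [hAAdef, blocks_mul_conjTranspose]
    refine Finset.sum_congr rfl fun i _ => ?_
    rw [hXf i, conjTranspose_fromCols_eq_fromRows_conjTranspose, fromCols_mul_fromRows,
      conjTranspose_smul, conjTranspose_zero, Matrix.mul_zero, add_zero,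
      matSqrt_herm (hρP i), smul_mul_assoc, mul_smul_comm, smul_smul,
      Complex.star_def, Complex.conj_ofReal, ← Complex.ofReal_mul,
      Real.mul_self_sqrt (hp i), matSqrt_mul_self (hρP i)]
  have hBBB : BB * BBᴴ = ∑ i, (q i : ℂ) • σ i := by
    rw [hBBdef, blocks_mul_conjTranspose]
    refine Finset.sum_congr rfl fun i _ => ?_
    rw [hYf i, conjTranspose_fromCols_eq_fromRows_conjTranspose, fromCols_mul_fromRows,
      conjTranspose_smul, conjTranspose_smul, smul_mul_assoc, mul_smul_comm, smul_smul,
      smul_mul_assoc, mul_smul_comm, smul_smul,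
      Complex.star_def, Complex.conj_ofReal, ← Complex.ofReal_mul,
      Real.mul_self_sqrt (hq i), ← smul_add, hSd i]
  have htrAB : (AAᴴ * BB).trace
      = ∑ i, ((Real.sqrt (p i) * Real.sqrt (q i) : ℝ) : ℂ) * ((G i).trace) := by
    rw [hAAdef, hBBdef, blocks_trace]
    refine Finset.sum_congr rfl fun i _ => ?_
    rw [hXf i, hYf i, conjTranspose_fromCols_eq_fromRows_conjTranspose,
      fromRows_mul_fromCols, trace_fromBlocks, conjTranspose_smul, conjTranspose_zero,
      Matrix.zero_mul, trace_zero, add_zero, smul_mul_assoc,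
      mul_smul_comm, smul_smul, Complex.star_def, Complex.conj_ofReal, ← Complex.ofReal_mul,
      hRSW i, trace_smul, smul_eq_mul]
  have hre : ((AAᴴ * BB).trace).re = ∑ i, Real.sqrt (p i * q i) * fidelity (ρ i) (σ i) := by
    rw [htrAB, Complex.re_sum]
    refine Finset.sum_congr rfl fun i _ => ?_
    rw [hfid_i i, Real.sqrt_mul (hp i)]
    simp [Complex.mul_re]
  have hub := uhlmann hρbP hσbP AA BB hAAA hBBB
  have hre_le : ((AAᴴ * BB).trace).re ≤ ‖(AAᴴ * BB).trace‖ := by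
    calc ((AAᴴ * BB).trace).re ≤ |((AAᴴ * BB).trace).re| := le_abs_self _
      _ ≤ ‖(AAᴴ * BB).trace‖ := Complex.abs_re_le_norm _
      _ = ‖(AAᴴ * BB).trace‖ := rfl
  rw [ge_iff_le, ← hre]
  exact le_trans hre_le hub
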